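/- arXiv:1411.4136 — 7 statements merged into one kernel-verified Lean document; each statement's English description precedes it below -/
import Mathlib

section
/- Let c > 0. The set D1 of real symmetric 2×2 matrices V such that Tr(XV) ≥ 2c·√(det X) for all positive definite 2×2 matrices X equals the set D2 of positive definite symmetric 2×2 matrices V with det V ≥ c². -/
/-!
For positive definite `X` and `V`, `Tr(XV) ≥ 2 √(det X det V)`: after multiplying by `X₀₀ V₀₀` the
difference of the squares is a sum of squares. Conversely, testing `V` against the unimodular
matrices `s e₀ e₀ᵀ + s⁻¹ w wᵀ` gives `s V₀₀ + s⁻¹ wᵀVw ≥ 2c` for all `s > 0`, hence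
`V₀₀ > 0` and `V₀₀ · wᵀVw ≥ c²`; choosing `w = (-V₀₁/V₀₀, 1)` turns the latter into `det V ≥ c²`.
-/

open Matrix

lemma pos_and_sq_le_mul_of_forall_le_mul_add_div {K A B : ℝ} (hK : 0 < K)
    (h : ∀ s > 0, 2 * K ≤ s * A + B / s) : 0 < A ∧ K ^ 2 ≤ A * B := by
  have hA : 0 < A := by
    by_contra! hA
    have hs : 0 < (|B| + 1) / K := by positivity
    have h1 := h _ hs
    have h2 : B / ((|B| + 1) / K) < K := by
      rw [div_div_eq_mul_div, div_lt_iff₀ (by positivity)]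
      nlinarith [le_abs_self B]
    nlinarith [mul_nonpos_of_nonneg_of_nonpos hs.le hA]
  refine ⟨hA, ?_⟩
  have h1 := h (K / A) (by positivity)
  rw [div_div_eq_mul_div, div_mul_cancel₀ _ hA.ne'] at h1
  have h2 : K ≤ B * A / K := by linarith
  rw [le_div_iff₀ hK] at h2
  nlinarith

namespace Matrix

lemma IsHermitian.eq_fin_two {A : Matrix (Fin 2) (Fin 2) ℝ} (hA : A.IsHermitian) : A = !![A 0 0, A 0 1; A 0 1, A 1 1] := by
  conv_lhs => rw [eta_fin_two A]
  rw [← hA.apply 0 1]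
  rfl

lemma posDef_fin_two_iff {x y z : ℝ} :
    (!![x, y; y, z] : Matrix (Fin 2) (Fin 2) ℝ).PosDef ↔ 0 < x ∧ y * y < x * z := by
  constructor
  · intro h
    have hdet := h.det_pos
    rw [det_fin_two_of] at hdet
    exact ⟨by simpa using h.diag_pos (i := 0), by linarith⟩
  · rintro ⟨hx, hD⟩
    refine posDef_iff_dotProduct_mulVec.2 ⟨?_, fun v hv => ?_⟩
    · ext i j
      fin_cases i <;> fin_cases j <;> rfl
    have hQ : star v ⬝ᵥ !![x, y; y, z] *ᵥ v = x * v 0 ^ 2 + 2 * y * v 0 * v 1 + z * v 1 ^ 2 := by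
      simp only [dotProduct, Pi.star_apply, star_trivial, mulVec, of_apply, cons_val',
        cons_val_fin_one, Fin.sum_univ_two, cons_val_zero, cons_val_one]
      ring
    have hxQ : x * (x * v 0 ^ 2 + 2 * y * v 0 * v 1 + z * v 1 ^ 2) =
        (x * v 0 + y * v 1) ^ 2 + (x * z - y * y) * v 1 ^ 2 := by ring
    refine pos_of_mul_pos_right (a := x) ?_ hx.le
    rw [hQ, hxQ]
    have := sub_pos.2 hD
    by_cases hv1 : v 1 = 0
    · have hv0 : v 0 ≠ 0 := fun hv0 => hv (by ext i; fin_cases i <;> simp [hv0, hv1])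
      simp only [hv1, mul_zero, add_zero, ne_eq, OfNat.ofNat_ne_zero, not_false_eq_true,
        zero_pow]
      positivity
    · positivity

lemma two_mul_sqrt_det_mul_det_le_trace_mul {X V : Matrix (Fin 2) (Fin 2) ℝ}
    (hX : X.PosDef) (hV : V.PosDef) : 2 * √(X.det * V.det) ≤ (X * V).trace := by
  rw [hX.isHermitian.eq_fin_two, hV.isHermitian.eq_fin_two] at *
  set x := X 0 0; set y := X 0 1; set z := X 1 1
  set a := V 0 0; set b := V 0 1; set d := V 1 1
  obtain ⟨hx, hDX⟩ := posDef_fin_two_iff.1 hX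
  obtain ⟨ha, hDV⟩ := posDef_fin_two_iff.1 hV
  simp only [det_fin_two_of, mul_fin_two, trace_fin_two_of]
  have hT : 0 ≤ x * a + y * b + (y * b + z * d) := by
    have hd : 0 < d := by nlinarith [mul_self_nonneg b]
    have key : a * x * (x * a + y * b + (y * b + z * d)) =
        (a * x + b * y) ^ 2 + (a * d - b * b) * y ^ 2 + a * d * (x * z - y * y) := by ring
    have : 0 ≤ a * x * (x * a + y * b + (y * b + z * d)) := by
      rw [key]
      have := sub_pos.2 hDV
      have := sub_pos.2 hDX
      positivity
    exact nonneg_of_mul_nonneg_right this (mul_pos ha hx)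
  have hsos : x ^ 2 * ((x * a + y * b + (y * b + z * d)) ^ 2
        - 4 * ((x * z - y * y) * (a * d - b * b))) =
      (a * x ^ 2 + 2 * b * x * y + 2 * d * y ^ 2 - d * x * z) ^ 2
        + 4 * (x * z - y * y) * (b * x + d * y) ^ 2 := by
    ring
  rw [← le_div_iff₀' two_pos, Real.sqrt_le_iff]
  refine ⟨by positivity, ?_⟩
  have : 0 ≤ (x * a + y * b + (y * b + z * d)) ^ 2 - 4 * ((x * z - y * y) * (a * d - b * b)) := by
    refine nonneg_of_mul_nonneg_right (a := x ^ 2) ?_ (by positivity)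
    rw [hsos]
    have := sub_pos.2 hDX
    positivity
  nlinarith

lemma pos_and_sq_le_det_of_forall_le_trace_mul {c a b d : ℝ} (hc : 0 < c)
    (h : ∀ X : Matrix (Fin 2) (Fin 2) ℝ, X.PosDef →
      2 * c * √X.det ≤ (X * !![a, b; b, d]).trace) :
    0 < a ∧ c ^ 2 ≤ a * d - b * b := by
  -- test against `s • e₀ e₀ᵀ + s⁻¹ • w wᵀ` with `w = (u, 1)`, of determinant `1`
  have key : ∀ u : ℝ, 0 < a ∧ c ^ 2 ≤ a * (a * u ^ 2 + 2 * b * u + d) := by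
    intro u
    refine pos_and_sq_le_mul_of_forall_le_mul_add_div hc fun s hs => ?_
    have hX : (!![s + u ^ 2 / s, u / s; u / s, 1 / s] : Matrix (Fin 2) (Fin 2) ℝ).PosDef := by
      refine posDef_fin_two_iff.2 ⟨by positivity, ?_⟩
      field_simp
      nlinarith [pow_pos hs 4]
    have h1 := h _ hX
    have hdet : (s + u ^ 2 / s) * (1 / s) - u / s * (u / s) = 1 := by field_simp; ring
    rw [det_fin_two_of, hdet, Real.sqrt_one, mul_one, mul_fin_two, trace_fin_two_of] at h1
    convert h1 using 1
    field_simp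
    ring
  obtain ⟨ha, -⟩ := key 0
  refine ⟨ha, ?_⟩
  have h1 := (key (-b / a)).2
  have h2 : a * (a * (-b / a) ^ 2 + 2 * b * (-b / a) + d) = a * d - b * b := by
    field_simp
    ring
  linarith

end Matrix

/-- For `c > 0`, the set of real symmetric 2×2 matrices `V` with
`Tr(XV) ≥ 2c√(det X)` for all symmetric positive definite `X` equals the set of
symmetric positive definite `V` with `det V ≥ c²`. -/
theorem stmt0 (c : ℝ) (hc : 0 < c) :
    {V : Matrix (Fin 2) (Fin 2) ℝ | V.IsHermitian ∧
      ∀ X : Matrix (Fin 2) (Fin 2) ℝ, X.PosDef →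
        2 * c * Real.sqrt X.det ≤ (X * V).trace} =
    {V : Matrix (Fin 2) (Fin 2) ℝ | V.PosDef ∧ c ^ 2 ≤ V.det} := by
  ext V
  constructor
  · rintro ⟨hV, h⟩
    rw [hV.eq_fin_two] at h ⊢
    obtain ⟨ha, hdet⟩ := pos_and_sq_le_det_of_forall_le_trace_mul hc h
    refine ⟨posDef_fin_two_iff.2 ⟨ha, by nlinarith⟩, by rwa [det_fin_two_of]⟩
  · rintro ⟨hV, hdet⟩
    refine ⟨hV.isHermitian, fun X hX => ?_⟩
    calc 2 * c * √X.det = 2 * √(X.det * c ^ 2) := by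
          rw [Real.sqrt_mul hX.det_pos.le, Real.sqrt_sq hc.le]; ring
      _ ≤ 2 * √(X.det * V.det) := by gcongr; exact hX.det_pos.le
      _ ≤ (X * V).trace := two_mul_sqrt_det_mul_det_le_trace_mul hX hV
end

section
/- For 2×2 real symmetric positive definite matrices A and W, (Tr√(√A W √A))² = Tr(W A) + 2√(det(W A)). In particular, the Nagaoka bound C^N[W] = (F(G⁻¹, W))² equals Tr(W G⁻¹) + 2√(det(W G⁻¹)) where F(A,B) = Tr√(√A B √A). -/
open Matrix

section
open scoped ComplexOrder
noncomputable def Matrix.PosSemidef.sqrt {𝕜 : Type*} [RCLike 𝕜] {n : Type*} [Fintype n]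
    [DecidableEq n] {A : Matrix n n 𝕜} (hA : A.PosSemidef) : Matrix n n 𝕜 :=
  hA.1.eigenvectorUnitary.1 * diagonal ((↑) ∘ (√·) ∘ hA.1.eigenvalues) *
    (star hA.1.eigenvectorUnitary : Matrix n n 𝕜)
end

/-!
For every `2 × 2` matrix `S`, Cayley–Hamilton gives `(Tr S)² = Tr(S²) + 2 det S`.
Taking `S = √M` with `M = √A W √A`, we get `Tr(S²) = Tr M = Tr(W A)` by cyclicity of the
trace, and `det S = √(det M) = √(det(W A))` because the positive square root has
nonnegative determinant.
-/

section

variable {R : Type*} [CommRing R] {n : Type*} [Fintype n]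

lemma Matrix.trace_sq_fin_two (S : Matrix (Fin 2) (Fin 2) R) :
    S.trace ^ 2 = (S * S).trace + 2 * S.det := by
  simp only [trace_fin_two, det_fin_two, mul_apply, Fin.sum_univ_two]
  ring

lemma Matrix.trace_mul_mul_of_mul_self_eq {S A : Matrix n n R} (hS : S * S = A)
    (W : Matrix n n R) : (S * W * S).trace = (W * A).trace := by
  rw [trace_mul_cycle, hS, trace_mul_comm]

lemma Matrix.det_mul_mul_of_mul_self_eq [DecidableEq n] {S A : Matrix n n R} (hS : S * S = A)
    (W : Matrix n n R) : (S * W * S).det = (W * A).det := by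
  rw [← hS, det_mul, det_mul, det_mul, det_mul]
  ring

end

namespace Matrix.PosSemidef

open scoped ComplexOrder MatrixOrder

variable {𝕜 : Type*} [RCLike 𝕜] {n : Type*} [Fintype n] [DecidableEq n]

lemma sqrt_eq_cfcSqrt {A : Matrix n n 𝕜} (hA : A.PosSemidef) : hA.sqrt = CFC.sqrt A := by
  rw [CFC.sqrt_eq_cfc, cfc_nnreal_eq_real _ A, hA.1.cfc_eq]
  simp [PosSemidef.sqrt, IsHermitian.cfc, Function.comp_def, hA.eigenvalues_nonneg]

lemma sqrt_mul_self {A : Matrix n n 𝕜} (hA : A.PosSemidef) : hA.sqrt * hA.sqrt = A := by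
  rw [hA.sqrt_eq_cfcSqrt]
  exact CFC.sqrt_mul_sqrt_self A hA.nonneg

lemma det_sqrt_eq_sqrt_det {A : Matrix n n ℝ} (hA : A.PosSemidef) : hA.sqrt.det = √A.det := by
  rw [hA.sqrt_eq_cfcSqrt, hA.det_sqrt, RCLike.sqrt_real]

end Matrix.PosSemidef

theorem stmt5_general (A W : Matrix (Fin 2) (Fin 2) ℝ) (hA : A.PosDef)
    (hM : (hA.posSemidef.sqrt * W * hA.posSemidef.sqrt).PosSemidef) :
    hM.sqrt.trace ^ 2 = (W * A).trace + 2 * Real.sqrt (W * A).det := by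
  have hS := hA.posSemidef.sqrt_mul_self
  rw [trace_sq_fin_two, hM.sqrt_mul_self, hM.det_sqrt_eq_sqrt_det,
    trace_mul_mul_of_mul_self_eq hS, det_mul_mul_of_mul_self_eq hS]

/-- For 2×2 real symmetric positive definite `A`, `W`,
`(Tr √(√A W √A))² = Tr(W A) + 2√(det(W A))` (the Nagaoka bound equals
`Tr(W G⁻¹) + 2√det(W G⁻¹)` taking `A = G⁻¹`). -/
theorem stmt5 (A W : Matrix (Fin 2) (Fin 2) ℝ) (hA : A.PosDef) (hW : W.PosDef)
    (hM : (hA.posSemidef.sqrt * W * hA.posSemidef.sqrt).PosSemidef) :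
    hM.sqrt.trace ^ 2 = (W * A).trace + 2 * Real.sqrt (W * A).det :=
  stmt5_general A W hA hM
end

section
/- Let G⁻¹ be a 2×2 real symmetric positive definite matrix. The following three sets of 2×2 real symmetric matrices are equal: D_N = {V : Tr(WV) ≥ Tr(W G⁻¹) + 2√(det(W G⁻¹)) for all W > 0}, D_GM = {V : V > G⁻¹ and Tr(G⁻¹ V⁻¹) ≤ 1}, and D = {V : V > G⁻¹ and det(V − G⁻¹) ≥ det G⁻¹}. -/
/-!
Write `A = V - G⁻¹` and `g = det G⁻¹`. Since `tr (W V) = tr (W G⁻¹) + tr (W A)` and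
`det (W G⁻¹) = g det W`, membership in `D_N` says `2 √(g det W) ≤ tr (W A)` for every `W > 0`.
If `A > 0` and `det A ≥ g` this follows from AM-GM for the (positive) eigenvalues of `W A`,
`2 √(det (W A)) ≤ tr (W A)`. Conversely, diagonal test matrices `W` force `A₀₀ > 0`, and a test
matrix built from `adj A` forces `det A ≥ g`. The equality `D_GM = D` is the `2 × 2` identity
`det (V - G⁻¹) = det V - tr (G⁻¹ adj V) + det G⁻¹`.
-/

open Matrix

theorem Matrix.IsHermitian.exists_eq_fin_two {R : Type*} [Star R] [TrivialStar R]
    {M : Matrix (Fin 2) (Fin 2) R} (hM : M.IsHermitian) : ∃ a b c, M = !![a, b; b, c] := by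
  have h10 : M 1 0 = M 0 1 := by simpa using congrFun (congrFun hM 0) 1
  exact ⟨M 0 0, M 0 1, M 1 1, h10 ▸ eta_fin_two M⟩

theorem Matrix.posDef_fin_two_of_iff {a b c : ℝ} :
    (!![a, b; b, c]).PosDef ↔ 0 < a ∧ 0 < a * c - b * b := by
  constructor
  · intro h
    exact ⟨by simpa using h.diag_pos (i := 0), by simpa using h.det_pos⟩
  · rintro ⟨ha, hd⟩
    rw [posDef_iff_dotProduct_mulVec]
    refine ⟨by ext i j; fin_cases i <;> fin_cases j <;> rfl, fun x hx => ?_⟩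
    simp only [dotProduct, mulVec, Fin.sum_univ_two, star_trivial, of_apply, cons_val',
      cons_val_zero, cons_val_one, empty_val', cons_val_fin_one]
    rcases eq_or_ne (x 1) 0 with h1 | h1
    · have h0 : x 0 ≠ 0 := fun h0 => hx (funext fun i => by fin_cases i <;> simp [h0, h1])
      simp only [h1]
      nlinarith [mul_pos ha (sq_pos_of_ne_zero h0)]
    · -- `a` times the form is `(a x₀ + b x₁)² + (ac - b²) x₁²`
      nlinarith [sq_nonneg (a * x 0 + b * x 1), mul_pos hd (sq_pos_of_ne_zero h1)]

theorem Matrix.PosDef.two_mul_sqrt_det_mul_det_le_trace_mul {W A : Matrix (Fin 2) (Fin 2) ℝ}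
    (hW : W.PosDef) (hA : A.PosDef) : 2 * √(W.det * A.det) ≤ (W * A).trace := by
  obtain ⟨w₁, w₂, w₃, rfl⟩ := hW.isHermitian.exists_eq_fin_two
  obtain ⟨a₁, a₂, a₃, rfl⟩ := hA.isHermitian.exists_eq_fin_two
  rw [posDef_fin_two_of_iff] at hW hA
  obtain ⟨hw₁, hdW⟩ := hW
  obtain ⟨ha₁, hdA⟩ := hA
  simp only [det_fin_two_of, mul_fin_two, trace_fin_two_of]
  have hw₃ : 0 < w₃ := by nlinarith [mul_self_nonneg w₂]
  have ha₃ : 0 < a₃ := by nlinarith [mul_self_nonneg a₂]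
  have htr : 0 ≤ w₁ * a₁ + w₂ * a₂ + (w₂ * a₂ + w₃ * a₃) := by
    nlinarith [mul_pos hdW hdA, sq_nonneg (w₁ * a₁ - w₃ * a₃), mul_pos hw₁ ha₁, mul_pos hw₃ ha₃]
  have hsq : 4 * ((w₁ * w₃ - w₂ * w₂) * (a₁ * a₃ - a₂ * a₂)) ≤
      (w₁ * a₁ + w₂ * a₂ + (w₂ * a₂ + w₃ * a₃)) ^ 2 := by
    nlinarith [sq_nonneg (a₁ * w₁ ^ 2 + 2 * a₂ * w₂ * w₁ + a₃ * (2 * w₂ ^ 2 - w₁ * w₃)),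
      mul_nonneg hdW.le (sq_nonneg (w₁ * a₂ + w₂ * a₃)), mul_pos hw₁ hw₁, mul_pos hw₁ hw₃]
  have hx : 0 ≤ (w₁ * w₃ - w₂ * w₂) * (a₁ * a₃ - a₂ * a₂) := (mul_pos hdW hdA).le
  nlinarith [Real.sq_sqrt hx, Real.sqrt_nonneg ((w₁ * w₃ - w₂ * w₂) * (a₁ * a₃ - a₂ * a₂))]

theorem Matrix.IsHermitian.posDef_and_le_det_of_forall_two_mul_sqrt_le_trace_mul
    {A : Matrix (Fin 2) (Fin 2) ℝ} (hA : A.IsHermitian) {g : ℝ} (hg : 0 < g)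
    (h : ∀ W : Matrix (Fin 2) (Fin 2) ℝ, W.PosDef → 2 * √(W.det * g) ≤ (W * A).trace) :
    A.PosDef ∧ g ≤ A.det := by
  obtain ⟨a, b, c, rfl⟩ := hA.exists_eq_fin_two
  have test (w₁ w₂ w₃ r : ℝ) (hw₁ : 0 < w₁) (hr : 0 < r)
      (hdet : (w₁ * w₃ - w₂ * w₂) * g = r ^ 2) :
      2 * r ≤ w₁ * a + 2 * w₂ * b + w₃ * c := by
    have hW : (!![w₁, w₂; w₂, w₃]).PosDef :=
      posDef_fin_two_of_iff.2 ⟨hw₁, pos_of_mul_pos_left (hdet ▸ pow_pos hr 2) hg.le⟩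
    have := h _ hW
    simp only [det_fin_two_of, mul_fin_two, trace_fin_two_of, hdet, Real.sqrt_sq hr.le] at this
    linarith
  have ha : 0 < a := by
    rcases le_or_gt c 0 with hc | hc
    · have hr := Real.sqrt_pos.2 hg
      linarith [test 1 0 1 (√g) one_pos hr (by simp [Real.sq_sqrt hg.le])]
    · have hgc : g / c ^ 2 * c = g / c := by field_simp
      linarith [test 1 0 (g / c ^ 2) (g / c) one_pos (div_pos hg hc) (by field_simp; ring),
        div_pos hg hc]
  -- the test matrix is `a • adj A` with its corner shifted so that `det W = a² g`
  have hdet : g ≤ a * c - b * b := by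
    have := test (b ^ 2 + g) (-(a * b)) (a ^ 2) (a * g) (by positivity) (by positivity) (by ring)
    nlinarith
  rw [posDef_fin_two_of_iff, det_fin_two_of]
  exact ⟨⟨ha, by linarith⟩, hdet⟩

theorem Matrix.IsHermitian.forall_posDef_two_mul_sqrt_le_trace_mul_iff
    {A : Matrix (Fin 2) (Fin 2) ℝ} (hA : A.IsHermitian) {g : ℝ} (hg : 0 < g) :
    (∀ W : Matrix (Fin 2) (Fin 2) ℝ, W.PosDef → 2 * √(W.det * g) ≤ (W * A).trace) ↔
      A.PosDef ∧ g ≤ A.det := by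
  refine ⟨hA.posDef_and_le_det_of_forall_two_mul_sqrt_le_trace_mul hg,
    fun ⟨hApos, hgA⟩ W hW => ?_⟩
  calc 2 * √(W.det * g) ≤ 2 * √(W.det * A.det) := by gcongr; exact hW.det_pos.le
    _ ≤ (W * A).trace := hW.two_mul_sqrt_det_mul_det_le_trace_mul hApos

theorem Matrix.det_sub_fin_two {R : Type*} [CommRing R] (A B : Matrix (Fin 2) (Fin 2) R) :
    (A - B).det = A.det - (B * A.adjugate).trace + B.det := by
  simp only [det_fin_two, adjugate_fin_two, trace_fin_two, mul_apply, Fin.sum_univ_two, sub_apply,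
    of_apply, cons_val', cons_val_zero, cons_val_one, empty_val', cons_val_fin_one]
  ring

theorem Matrix.PosDef.trace_mul_inv_le_one_iff {G V : Matrix (Fin 2) (Fin 2) ℝ} (hG : G.PosDef)
    (hVG : (V - G).PosDef) : (G * V⁻¹).trace ≤ 1 ↔ G.det ≤ (V - G).det := by
  have hV : V.PosDef := by simpa using hG.add hVG
  rw [inv_def, Ring.inverse_eq_inv, Matrix.mul_smul, trace_smul, smul_eq_mul,
    inv_mul_le_iff₀ hV.det_pos, mul_one, det_sub_fin_two]
  constructor <;> intro <;> linarith

/-- For a fixed 2×2 symmetric positive definite `G⁻¹`, the sets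
`D_N`, `D_GM` and `D` of symmetric matrices coincide. -/
theorem stmt7 (Ginv : Matrix (Fin 2) (Fin 2) ℝ) (hG : Ginv.PosDef) :
    {V : Matrix (Fin 2) (Fin 2) ℝ | V.IsHermitian ∧
      ∀ W : Matrix (Fin 2) (Fin 2) ℝ, W.PosDef →
        (W * Ginv).trace + 2 * Real.sqrt (W * Ginv).det ≤ (W * V).trace} =
    {V : Matrix (Fin 2) (Fin 2) ℝ | V.IsHermitian ∧
      (V - Ginv).PosDef ∧ (Ginv * V⁻¹).trace ≤ 1} ∧
    {V : Matrix (Fin 2) (Fin 2) ℝ | V.IsHermitian ∧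
      (V - Ginv).PosDef ∧ (Ginv * V⁻¹).trace ≤ 1} =
    {V : Matrix (Fin 2) (Fin 2) ℝ | V.IsHermitian ∧
      (V - Ginv).PosDef ∧ Ginv.det ≤ (V - Ginv).det} := by
  have hN (V : Matrix (Fin 2) (Fin 2) ℝ) (hV : V.IsHermitian) :
      (∀ W : Matrix (Fin 2) (Fin 2) ℝ, W.PosDef →
        (W * Ginv).trace + 2 * Real.sqrt (W * Ginv).det ≤ (W * V).trace) ↔
      (V - Ginv).PosDef ∧ Ginv.det ≤ (V - Ginv).det := by
    have hsplit (W : Matrix (Fin 2) (Fin 2) ℝ) :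
        (W * V).trace = (W * Ginv).trace + (W * (V - Ginv)).trace := by
      rw [Matrix.mul_sub, trace_sub, add_sub_cancel]
    simp only [hsplit, det_mul, add_le_add_iff_left]
    exact (hV.sub hG.isHermitian).forall_posDef_two_mul_sqrt_le_trace_mul_iff hG.det_pos
  have hGM (V : Matrix (Fin 2) (Fin 2) ℝ) :
      (V.IsHermitian ∧ (V - Ginv).PosDef ∧ (Ginv * V⁻¹).trace ≤ 1) ↔
      (V.IsHermitian ∧ (V - Ginv).PosDef ∧ Ginv.det ≤ (V - Ginv).det) :=
    and_congr_right fun _ => and_congr_right hG.trace_mul_inv_le_one_iff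
  exact ⟨Set.ext fun V => (and_congr_right (hN V)).trans (hGM V).symm, Set.ext hGM⟩
end

section
/- For a 3×3 real symmetric positive semidefinite matrix V (the MSE matrix) with 2×2 upper-left block V₂ and (3,3)-entry v₃₃ > g³³ > 0, and scaling factor γ = v₃₃/(v₃₃ − g³³), the condition that Tr(W(3) V) ≥ (√(Tr(W G⁻¹) + 2√det(W G⁻¹)) + √(w₃ g³³))² for all block-diagonal W(3) = diag(W, w₃) with W > 0 and w₃ > 0 is equivalent to: V₂ > γ G⁻¹ and det(V₂ − γ G⁻¹) ≥ det(γ G⁻¹). -/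
/-!
For a fixed `W`, optimising over `w₃` is a one-variable quadratic minimisation (in `√w₃`):
the family of inequalities holds iff `γ (Tr(W G⁻¹) + 2√det(W G⁻¹)) ≤ Tr(W V₂)`, i.e.
`2√(det W · det(γ G⁻¹)) ≤ Tr(W M)` with `M = V₂ - γ G⁻¹`. For a `2 × 2` symmetric `M` and
`d > 0`, this holds for all `W > 0` iff `M > 0` and `d ≤ det M`: sufficiency is the AM-GM
inequality `2√(det W det M) ≤ Tr(W M)`, and necessity follows by testing the rank-two
family `W = t² x xᵀ + y yᵀ`, which turns the condition into a quadratic inequality in `t`.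
-/

open Matrix

theorem forall_two_mul_le_mul_sq_add_iff {A B C : ℝ} (hB : 0 < B) :
    (∀ s : ℝ, 0 < s → 2 * B * s ≤ A * s ^ 2 + C) ↔ 0 < A ∧ B ^ 2 ≤ A * C := by
  constructor
  · intro h
    have hA : 0 < A := by
      by_contra! hA
      have hs := h ((|C| + 1) / (2 * B)) (by positivity)
      rw [mul_div_cancel₀ _ (by positivity)] at hs
      nlinarith [le_abs_self C, sq_nonneg ((|C| + 1) / (2 * B))]
    refine ⟨hA, ?_⟩
    have hs := h (B / A) (by positivity)
    field_simp at hs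
    nlinarith
  · rintro ⟨hA, hBAC⟩ s hs
    nlinarith [sq_nonneg (A * s - B)]

theorem two_sqrt_sub_sq_mul_sub_sq_le {a b c p q r : ℝ} (ha : 0 ≤ a) (hc : 0 ≤ c) (hp : 0 ≤ p)
    (hr : 0 ≤ r) (habc : b ^ 2 ≤ a * c) (hpqr : q ^ 2 ≤ p * r) :
    2 * √((a * c - b ^ 2) * (p * r - q ^ 2)) ≤ a * p + c * r + 2 * b * q := by
  have hT : 0 ≤ a * p + c * r + 2 * b * q := by
    nlinarith [sq_nonneg (a * p - c * r), mul_le_mul habc hpqr (sq_nonneg q) (mul_nonneg ha hc),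
      mul_nonneg ha hp, mul_nonneg hc hr]
  have hdisc : 4 * ((a * c - b ^ 2) * (p * r - q ^ 2)) ≤ (a * p + c * r + 2 * b * q) ^ 2 := by
    rcases ha.eq_or_lt with rfl | ha
    · nlinarith [sq_nonneg b, sq_nonneg (c * r + 2 * b * q)]
    · have hu : 0 ≤ a * c - b ^ 2 := by linarith
      -- With `W = L Lᵀ` (Cholesky) and `N = Lᵀ M L`, the right side is `a² ((N₀₀ - N₁₁)² + 4 N₀₁²)`.
      have hsos : 0 ≤ a ^ 2 *
          ((a * p + c * r + 2 * b * q) ^ 2 - 4 * ((a * c - b ^ 2) * (p * r - q ^ 2))) := by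
        rw [show a ^ 2 * ((a * p + c * r + 2 * b * q) ^ 2 - 4 * ((a * c - b ^ 2) * (p * r - q ^ 2)))
          = (a ^ 2 * p + 2 * a * b * q + b ^ 2 * r - r * (a * c - b ^ 2)) ^ 2
            + 4 * (a * c - b ^ 2) * (a * q + b * r) ^ 2 by ring]
        positivity
      nlinarith [pow_pos ha 2]
  calc 2 * √((a * c - b ^ 2) * (p * r - q ^ 2))
      = √(4 * ((a * c - b ^ 2) * (p * r - q ^ 2))) := by
        rw [show (4 : ℝ) = 2 ^ 2 by norm_num, Real.sqrt_mul (sq_nonneg 2), Real.sqrt_sq two_pos.le]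
    _ ≤ a * p + c * r + 2 * b * q := Real.sqrt_le_iff.2 ⟨hT, hdisc⟩

theorem two_sqrt_det_mul_det_le_trace_mul {W M : Matrix (Fin 2) (Fin 2) ℝ}
    (hW : W.PosSemidef) (hM : M.PosSemidef) : 2 * √(W.det * M.det) ≤ (W * M).trace := by
  have hWs : W 1 0 = W 0 1 := by simpa using hW.isHermitian.apply 0 1
  have hMs : M 1 0 = M 0 1 := by simpa using hM.isHermitian.apply 0 1
  have hdW := hW.det_nonneg
  have hdM := hM.det_nonneg
  rw [det_fin_two, hWs, ← sq] at hdW ⊢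
  rw [det_fin_two, hMs, ← sq] at hdM ⊢
  have htr : (W * M).trace = W 0 0 * M 0 0 + W 1 1 * M 1 1 + 2 * W 0 1 * M 0 1 := by
    simp only [trace_fin_two, mul_apply, Fin.sum_univ_two, hMs, hWs]
    ring
  rw [htr]
  exact two_sqrt_sub_sq_mul_sub_sq_le hW.diag_nonneg hW.diag_nonneg hM.diag_nonneg hM.diag_nonneg
    (by linarith) (by linarith)

theorem pos_and_le_of_forall_two_sqrt_det_mul_le_trace_mul {M : Matrix (Fin 2) (Fin 2) ℝ}
    {d : ℝ} (hd : 0 < d)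
    (H : ∀ W : Matrix (Fin 2) (Fin 2) ℝ, W.PosDef → 2 * √(W.det * d) ≤ (W * M).trace)
    {x y : Fin 2 → ℝ} (hxy : x 0 * y 1 - x 1 * y 0 ≠ 0) :
    0 < x ⬝ᵥ M *ᵥ x ∧ (x 0 * y 1 - x 1 * y 0) ^ 2 * d ≤ (x ⬝ᵥ M *ᵥ x) * (y ⬝ᵥ M *ᵥ y) := by
  set D := x 0 * y 1 - x 1 * y 0
  have hfamily : ∀ t : ℝ, 0 < t →
      2 * (|D| * √d) * t ≤ (x ⬝ᵥ M *ᵥ x) * t ^ 2 + y ⬝ᵥ M *ᵥ y := by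
    intro t ht
    set W := t ^ 2 • vecMulVec x x + vecMulVec y y
    have hdet : W.det = (t * D) ^ 2 := by
      simp only [W, D, det_fin_two, Matrix.add_apply, Matrix.smul_apply, vecMulVec_apply,
        smul_eq_mul]
      ring
    have hW : W.PosDef := by
      have hx := posSemidef_vecMulVec_self_star x
      have hy := posSemidef_vecMulVec_self_star y
      simp only [star_trivial] at hx hy
      refine ((hx.smul (sq_nonneg t)).add hy).posDef_iff_det_ne_zero.2 ?_
      rw [hdet]; positivity
    have htr : (W * M).trace = (x ⬝ᵥ M *ᵥ x) * t ^ 2 + y ⬝ᵥ M *ᵥ y := by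
      simp only [W, add_mul, smul_mul, trace_add, trace_smul, vecMulVec_mul, trace_vecMulVec,
        dotProduct_mulVec, smul_eq_mul]
      rw [dotProduct_comm x, dotProduct_comm y]; ring
    have := H W hW
    rw [hdet, htr, Real.sqrt_mul (sq_nonneg _), Real.sqrt_sq_eq_abs, abs_mul, abs_of_pos ht] at this
    linarith
  have := (forall_two_mul_le_mul_sq_add_iff (by positivity)).1 hfamily
  rwa [mul_pow, Real.sq_sqrt hd.le, sq_abs] at this

theorem forall_two_sqrt_det_mul_le_trace_mul_iff {M : Matrix (Fin 2) (Fin 2) ℝ}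
    (hM : M.IsHermitian) {d : ℝ} (hd : 0 < d) :
    (∀ W : Matrix (Fin 2) (Fin 2) ℝ, W.PosDef → 2 * √(W.det * d) ≤ (W * M).trace) ↔
      M.PosDef ∧ d ≤ M.det := by
  constructor
  · intro H
    have hPD : M.PosDef := by
      refine .of_dotProduct_mulVec_pos hM fun x hx =>
        (pos_and_le_of_forall_two_sqrt_det_mul_le_trace_mul hd H (y := ![-x 1, x 0]) ?_).1
      have := (dotProduct_star_self_pos_iff.2 hx).ne'
      simp only [star_trivial, dotProduct, Fin.sum_univ_two] at this
      simpa using this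
    refine ⟨hPD, ?_⟩
    have hp : 0 < M 0 0 := hPD.diag_pos
    have hMs : M 1 0 = M 0 1 := by simpa using hM.apply 0 1
    -- `x` and `y` are `M`-orthogonal, so `(xᵀ M x) (yᵀ M y) = M₀₀² det M`
    have := (pos_and_le_of_forall_two_sqrt_det_mul_le_trace_mul hd H
      (x := ![1, 0]) (y := ![-M 0 1, M 0 0]) (by simp [hp.ne'])).2
    simp only [dotProduct, mulVec, Fin.sum_univ_two, cons_val_zero, cons_val_one,
      cons_val_fin_one, hMs] at this
    have h' : M 0 0 ^ 2 * d ≤ M 0 0 ^ 2 * (M 0 0 * M 1 1 - M 0 1 * M 1 0) := by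
      rw [hMs]; linarith
    rw [det_fin_two]
    exact le_of_mul_le_mul_left h' (pow_pos hp 2)
  · rintro ⟨hPD, hdM⟩ W hW
    calc 2 * √(W.det * d) ≤ 2 * √(W.det * M.det) := by
          gcongr; exact hW.posSemidef.det_nonneg
      _ ≤ (W * M).trace := two_sqrt_det_mul_det_le_trace_mul hW.posSemidef hPD.posSemidef

theorem forall_sq_sqrt_add_sqrt_le_iff {a g v T : ℝ} (ha : 0 < a) (hg : 0 < g) (hgv : g < v) :
    (∀ t : ℝ, 0 < t → (√a + √(t * g)) ^ 2 ≤ T + t * v) ↔ v / (v - g) * a ≤ T := by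
  have hvg : 0 < v - g := sub_pos.2 hgv
  have hsq : ∀ s : ℝ, 0 < s → ((√a + √(s ^ 2 * g)) ^ 2 ≤ T + s ^ 2 * v ↔
      2 * √(a * g) * s ≤ (v - g) * s ^ 2 + (T - a)) := by
    intro s hs
    rw [Real.sqrt_mul (sq_nonneg s), Real.sqrt_sq hs.le, Real.sqrt_mul ha.le]
    constructor <;> intro h <;> nlinarith [Real.sq_sqrt ha.le, Real.sq_sqrt hg.le]
  calc (∀ t : ℝ, 0 < t → (√a + √(t * g)) ^ 2 ≤ T + t * v)
      ↔ ∀ s : ℝ, 0 < s → (√a + √(s ^ 2 * g)) ^ 2 ≤ T + s ^ 2 * v :=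
        ⟨fun h s hs => h _ (by positivity), fun h t ht => by
          simpa [Real.sq_sqrt ht.le] using h √t (Real.sqrt_pos.2 ht)⟩
    _ ↔ ∀ s : ℝ, 0 < s → 2 * √(a * g) * s ≤ (v - g) * s ^ 2 + (T - a) :=
        forall₂_congr hsq
    _ ↔ 0 < v - g ∧ √(a * g) ^ 2 ≤ (v - g) * (T - a) :=
        forall_two_mul_le_mul_sq_add_iff (by positivity)
    _ ↔ v / (v - g) * a ≤ T := by
      rw [Real.sq_sqrt (by positivity), div_mul_eq_mul_div, div_le_iff₀ hvg]
      exact ⟨fun h => by linarith [h.2], fun h => ⟨hvg, by linarith⟩⟩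

theorem trace_block_diag_mul (W : Matrix (Fin 2) (Fin 2) ℝ) (w₃ : ℝ)
    (V : Matrix (Fin 3) (Fin 3) ℝ) :
    ((!![W 0 0, W 0 1, 0; W 1 0, W 1 1, 0; 0, 0, w₃] : Matrix (Fin 3) (Fin 3) ℝ) * V).trace =
      (W * !![V 0 0, V 0 1; V 1 0, V 1 1]).trace + w₃ * V 2 2 := by
  simp [trace_fin_three, trace_fin_two, mul_apply, vecMul, dotProduct, Fin.sum_univ_succ]

/-- For a 3×3 positive semidefinite MSE matrix `V` with upper-left
block `V₂` and `v₃₃ = V 2 2 > g³³ > 0`, with `γ = v₃₃/(v₃₃ − g³³)`, the family of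
HGM inequalities `Tr(W(3) V) ≥ (√(Tr(W G⁻¹) + 2√det(W G⁻¹)) + √(w₃ g³³))²` for all
block-diagonal `W(3) = diag(W, w₃)`, `W > 0`, `w₃ > 0`, is equivalent to
`V₂ > γ G⁻¹` and `det(V₂ − γ G⁻¹) ≥ det(γ G⁻¹)`. -/
theorem stmt8 (Ginv : Matrix (Fin 2) (Fin 2) ℝ) (hG : Ginv.PosDef)
    (g₃₃ : ℝ) (hg : 0 < g₃₃)
    (V : Matrix (Fin 3) (Fin 3) ℝ) (hV : V.PosSemidef) (hv : g₃₃ < V 2 2) :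
    (∀ (W : Matrix (Fin 2) (Fin 2) ℝ) (w₃ : ℝ), W.PosDef → 0 < w₃ →
      (Real.sqrt ((W * Ginv).trace + 2 * Real.sqrt (W * Ginv).det) +
        Real.sqrt (w₃ * g₃₃)) ^ 2 ≤
      ((!![W 0 0, W 0 1, 0; W 1 0, W 1 1, 0; 0, 0, w₃] :
          Matrix (Fin 3) (Fin 3) ℝ) * V).trace) ↔
    ((!![V 0 0, V 0 1; V 1 0, V 1 1] - (V 2 2 / (V 2 2 - g₃₃)) • Ginv).PosDef ∧
      ((V 2 2 / (V 2 2 - g₃₃)) • Ginv).det ≤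
        (!![V 0 0, V 0 1; V 1 0, V 1 1] - (V 2 2 / (V 2 2 - g₃₃)) • Ginv).det) := by
  set γ := V 2 2 / (V 2 2 - g₃₃) with hγdef
  set V₂ : Matrix (Fin 2) (Fin 2) ℝ := !![V 0 0, V 0 1; V 1 0, V 1 1] with hV₂def
  have hγ : 0 < γ := div_pos (hg.trans hv) (sub_pos.2 hv)
  have hV₂ : V₂.IsHermitian := by
    have hVs : V 0 1 = V 1 0 := by simpa using hV.isHermitian.apply 1 0
    ext i j; fin_cases i <;> fin_cases j <;> simp [V₂, hVs]
  have hfixed : ∀ W : Matrix (Fin 2) (Fin 2) ℝ, W.PosDef →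
      ((∀ w₃ : ℝ, 0 < w₃ → (√((W * Ginv).trace + 2 * √(W * Ginv).det) + √(w₃ * g₃₃)) ^ 2 ≤
        ((!![W 0 0, W 0 1, 0; W 1 0, W 1 1, 0; 0, 0, w₃] : Matrix (Fin 3) (Fin 3) ℝ) * V).trace) ↔
      2 * √(W.det * (γ • Ginv).det) ≤ (W * (V₂ - γ • Ginv)).trace) := by
    intro W hW
    have htr : 0 < (W * Ginv).trace := lt_of_lt_of_le
      (by have := hW.det_pos; have := hG.det_pos; positivity)
      (two_sqrt_det_mul_det_le_trace_mul hW.posSemidef hG.posSemidef)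
    simp only [trace_block_diag_mul]
    rw [forall_sq_sqrt_add_sqrt_le_iff (by positivity) hg hv, ← hγdef, ← hV₂def,
      Matrix.mul_sub, trace_sub, Matrix.mul_smul, trace_smul, smul_eq_mul, det_smul, det_mul,
      Fintype.card_fin,
      show W.det * (γ ^ 2 * Ginv.det) = γ ^ 2 * (W.det * Ginv.det) by ring,
      Real.sqrt_mul (sq_nonneg γ), Real.sqrt_sq hγ.le]
    constructor <;> intro h <;> linarith
  rw [← forall_two_sqrt_det_mul_le_trace_mul_iff (hV₂.sub (hG.smul hγ).isHermitian)
    (hG.smul hγ).det_pos]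
  exact ⟨fun h W hW => (hfixed W hW).1 fun w₃ hw₃ => h W w₃ hW hw₃,
    fun h W w₃ hW hw₃ => (hfixed W hW).2 (h W hW) w₃ hw₃⟩
end

section
/- For the qubit model ρ_θ = (1/2)(I + θ₁cos θ₃ σ₁ + θ₁ sin θ₃ σ₂ + θ₂ σ₃) with θ₁ ≠ 0 and θ₁² + θ₂² < 1, the inverse SLD Fisher information matrix for the three parameters (θ₁, θ₂, θ₃) is block diagonal: G(3)⁻¹ = diag((1−θ₁², −θ₁θ₂; −θ₁θ₂, 1−θ₂²), 1/θ₁²). In particular the parameters (θ₁, θ₂) are orthogonal to θ₃ with respect to the SLD Fisher information. -/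
open Matrix

/-- The qubit state `ρ_θ` of the model. -/
noncomputable def rhoQ (θ₁ θ₂ θ₃ : ℝ) : Matrix (Fin 2) (Fin 2) ℂ :=
  !![(1 + θ₂) / 2, θ₁ * Complex.exp (-(Complex.I * θ₃)) / 2;
     θ₁ * Complex.exp (Complex.I * θ₃) / 2, (1 - θ₂) / 2]

/-- The partial derivatives `∂_i ρ_θ` for `i = 1, 2, 3`. -/
noncomputable def drhoQ (θ₁ θ₂ θ₃ : ℝ) : Fin 3 → Matrix (Fin 2) (Fin 2) ℂ :=
  ![!![0, Complex.exp (-(Complex.I * θ₃)) / 2;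
      Complex.exp (Complex.I * θ₃) / 2, 0],
    !![1 / 2, 0; 0, -(1 / 2)],
    !![0, -(Complex.I * θ₁ * Complex.exp (-(Complex.I * θ₃))) / 2;
      Complex.I * θ₁ * Complex.exp (Complex.I * θ₃) / 2, 0]]

/-!
Write every 2 × 2 matrix in the Pauli basis as `a I + b·σ`. The state is `(I + r·σ)/2` with
Bloch vector `r = (θ₁ cos θ₃, θ₁ sin θ₃, θ₂)`, and `∂_i ρ = v_i·σ / 2` for real tangent vectors
`v_i`. The Jordan product of two such matrices is again of that form, so the SLD equation
becomes a linear system in `(a, b)`, solved by `a = -(r·v)/(1 - |r|²)`,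
`b = v + (r·v) r / (1 - |r|²)`.

We never need uniqueness of the SLD: since `X ↦ (ρX + Xρ)/2` is symmetric for the trace form,
`Re Tr(ρ L_i L_j) = Re Tr(ℓ_i ∂_j ρ)` for any solution `ℓ_i` of the `i`-th SLD equation.
This gives `g_{ij} = v_i·v_j + (r·v_i)(r·v_j)/(1 - |r|²)`, and `r·v_3 = v_1·v_3 = v_2·v_3 = 0`
makes the Fisher matrix block diagonal.
-/

section SymmMul

variable {n 𝕜 : Type*} [Fintype n]

def symmMul [Field 𝕜] (A B : Matrix n n 𝕜) : Matrix n n 𝕜 := ((1 : 𝕜) / 2) • (A * B + B * A)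

theorem trace_symmMul_mul_comm [Field 𝕜] (ρ X Y : Matrix n n 𝕜) :
    (symmMul ρ X * Y).trace = (X * symmMul ρ Y).trace := by
  simp only [symmMul, smul_mul_assoc, mul_smul_comm, trace_smul, add_mul, mul_add, trace_add,
    Matrix.mul_assoc]
  rw [trace_mul_comm ρ, Matrix.mul_assoc, add_comm]

theorem re_trace_mul_mul_eq_re_trace_symmMul_mul [RCLike 𝕜] {ρ A B : Matrix n n 𝕜}
    (hρ : ρ.IsHermitian) (hA : A.IsHermitian) (hB : B.IsHermitian) :
    RCLike.re (ρ * A * B).trace = RCLike.re (symmMul ρ A * B).trace := by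
  have hconj : (A * ρ * B).trace = star (ρ * A * B).trace := by
    rw [← trace_conjTranspose, conjTranspose_mul, conjTranspose_mul, hρ.eq, hA.eq, hB.eq,
      trace_mul_cycle, Matrix.mul_assoc]
  simp only [symmMul, smul_mul_assoc, trace_smul, add_mul, trace_add, hconj]
  rw [RCLike.star_def, RCLike.add_conj, smul_eq_mul, ← mul_assoc]
  simp

theorem re_trace_mul_mul_eq_of_symmMul_eq [RCLike 𝕜] {ρ A B ℓ : Matrix n n 𝕜}
    (hρ : ρ.IsHermitian) (hA : A.IsHermitian) (hB : B.IsHermitian)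
    (hℓ : symmMul ρ ℓ = symmMul ρ A) :
    RCLike.re (ρ * A * B).trace = RCLike.re (ℓ * symmMul ρ B).trace := by
  rw [re_trace_mul_mul_eq_re_trace_symmMul_mul hρ hA hB, ← hℓ, trace_symmMul_mul_comm]

end SymmMul

section Bloch

open Complex

/-- `bloch a b = a I + b₀ σ₁ + b₁ σ₂ + b₂ σ₃`. -/
def bloch (a : ℝ) (b : Fin 3 → ℝ) : Matrix (Fin 2) (Fin 2) ℂ :=
  !![a + b 2, b 0 - I * b 1; b 0 + I * b 1, a - b 2]

theorem isHermitian_bloch (a : ℝ) (b : Fin 3 → ℝ) : (bloch a b).IsHermitian := by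
  ext i j
  fin_cases i <;> fin_cases j <;> simp [bloch, conj_ofReal, sub_eq_add_neg]

theorem symmMul_bloch (a c : ℝ) (b d : Fin 3 → ℝ) :
    symmMul (bloch a b) (bloch c d) = bloch (a * c + b ⬝ᵥ d) (a • d + c • b) := by
  ext i j
  fin_cases i <;> fin_cases j <;>
    simp [symmMul, bloch, dotProduct, Fin.sum_univ_three] <;>
    ring_nf <;> simp only [I_sq] <;> ring

theorem trace_bloch_mul (a c : ℝ) (b d : Fin 3 → ℝ) :
    (bloch a b * bloch c d).trace = 2 * (a * c + b ⬝ᵥ d : ℝ) := by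
  simp [bloch, trace, dotProduct, Fin.sum_univ_three]
  linear_combination (-2 * b 1 * d 1 : ℂ) * I_sq

noncomputable def blochSLD (r v : Fin 3 → ℝ) : Matrix (Fin 2) (Fin 2) ℂ :=
  bloch (-(r ⬝ᵥ v) / (1 - r ⬝ᵥ r)) (v + ((r ⬝ᵥ v) / (1 - r ⬝ᵥ r)) • r)

theorem symmMul_blochSLD {r : Fin 3 → ℝ} (hr : r ⬝ᵥ r ≠ 1) (v : Fin 3 → ℝ) :
    symmMul (bloch (1 / 2) ((1 / 2 : ℝ) • r)) (blochSLD r v) = bloch 0 ((1 / 2 : ℝ) • v) := by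
  have hD : 1 - r ⬝ᵥ r ≠ 0 := sub_ne_zero.mpr hr.symm
  rw [blochSLD, symmMul_bloch]
  congr 1
  · simp only [smul_dotProduct, dotProduct_add, dotProduct_smul, smul_eq_mul]
    field_simp
    ring
  · ext k
    simp only [Pi.add_apply, Pi.smul_apply, smul_eq_mul]
    field_simp
    ring

noncomputable def blochFisher {ι : Type*} (r : Fin 3 → ℝ) (v : ι → Fin 3 → ℝ) : Matrix ι ι ℝ :=
  of fun i j => v i ⬝ᵥ v j + (r ⬝ᵥ v i) * (r ⬝ᵥ v j) / (1 - r ⬝ᵥ r)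

theorem trace_blochSLD_mul {ι : Type*} (r : Fin 3 → ℝ) (v : ι → Fin 3 → ℝ) (i j : ι) :
    (blochSLD r (v i) * bloch 0 ((1 / 2 : ℝ) • v j)).trace = blochFisher r v i j := by
  rw [blochSLD, trace_bloch_mul, blochFisher, of_apply]
  simp only [dotProduct_smul, add_dotProduct, smul_dotProduct, smul_eq_mul]
  push_cast
  ring

end Bloch

section QubitModel

open Real

noncomputable def blochVecQ (θ₁ θ₂ θ₃ : ℝ) : Fin 3 → ℝ := ![θ₁ * cos θ₃, θ₁ * sin θ₃, θ₂]

noncomputable def tangentQ (θ₁ θ₃ : ℝ) : Fin 3 → Fin 3 → ℝ :=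
  ![![cos θ₃, sin θ₃, 0], ![0, 0, 1], ![-(θ₁ * sin θ₃), θ₁ * cos θ₃, 0]]

noncomputable def fisherQ (θ₁ θ₂ : ℝ) : Matrix (Fin 3) (Fin 3) ℝ :=
  !![(1 - θ₂ ^ 2) / (1 - θ₁ ^ 2 - θ₂ ^ 2), θ₁ * θ₂ / (1 - θ₁ ^ 2 - θ₂ ^ 2), 0;
     θ₁ * θ₂ / (1 - θ₁ ^ 2 - θ₂ ^ 2), (1 - θ₁ ^ 2) / (1 - θ₁ ^ 2 - θ₂ ^ 2), 0;
     0, 0, θ₁ ^ 2]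

theorem exp_I_mul_ofReal (x : ℝ) : Complex.exp (Complex.I * x) = cos x + Complex.I * sin x := by
  rw [mul_comm, Complex.exp_mul_I, ← Complex.ofReal_cos, ← Complex.ofReal_sin, mul_comm]

theorem exp_neg_I_mul_ofReal (x : ℝ) :
    Complex.exp (-(Complex.I * x)) = cos x - Complex.I * sin x := by
  rw [← mul_neg, ← Complex.ofReal_neg, exp_I_mul_ofReal, cos_neg, sin_neg]
  push_cast
  ring

theorem rhoQ_eq_bloch (θ₁ θ₂ θ₃ : ℝ) :
    rhoQ θ₁ θ₂ θ₃ = bloch (1 / 2) ((1 / 2 : ℝ) • blochVecQ θ₁ θ₂ θ₃) := by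
  ext i j
  fin_cases i <;> fin_cases j <;>
    simp [rhoQ, bloch, blochVecQ, exp_I_mul_ofReal, exp_neg_I_mul_ofReal] <;> ring

theorem drhoQ_eq_bloch (θ₁ θ₂ θ₃ : ℝ) (i : Fin 3) :
    drhoQ θ₁ θ₂ θ₃ i = bloch 0 ((1 / 2 : ℝ) • tangentQ θ₁ θ₃ i) := by
  ext j k
  fin_cases i <;> fin_cases j <;> fin_cases k <;>
    simp [drhoQ, bloch, tangentQ, exp_I_mul_ofReal, exp_neg_I_mul_ofReal] <;>
    ring_nf <;> simp only [Complex.I_sq] <;> ring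

theorem dotProduct_blochVecQ_self (θ₁ θ₂ θ₃ : ℝ) :
    blochVecQ θ₁ θ₂ θ₃ ⬝ᵥ blochVecQ θ₁ θ₂ θ₃ = θ₁ ^ 2 + θ₂ ^ 2 := by
  simp [blochVecQ, dotProduct, Fin.sum_univ_three]
  linear_combination θ₁ ^ 2 * cos_sq_add_sin_sq θ₃

theorem blochFisher_blochVecQ_tangentQ {θ₁ θ₂ : ℝ} (h : θ₁ ^ 2 + θ₂ ^ 2 ≠ 1) (θ₃ : ℝ) :
    blochFisher (blochVecQ θ₁ θ₂ θ₃) (tangentQ θ₁ θ₃) = fisherQ θ₁ θ₂ := by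
  have hD : 1 - θ₁ ^ 2 - θ₂ ^ 2 ≠ 0 := by contrapose! h; linarith
  have hrt : ∀ i, blochVecQ θ₁ θ₂ θ₃ ⬝ᵥ tangentQ θ₁ θ₃ i = ![θ₁, θ₂, 0] i := by
    intro i
    fin_cases i <;> simp [blochVecQ, tangentQ, dotProduct, Fin.sum_univ_three]
    · linear_combination θ₁ * cos_sq_add_sin_sq θ₃
    · ring
  have htt : ∀ i j,
      tangentQ θ₁ θ₃ i ⬝ᵥ tangentQ θ₁ θ₃ j = !![1, 0, 0; 0, 1, 0; 0, 0, θ₁ ^ 2] i j := by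
    intro i j
    fin_cases i <;> fin_cases j <;> simp [tangentQ, dotProduct, Fin.sum_univ_three]
    · linear_combination cos_sq_add_sin_sq θ₃
    · ring
    · ring
    · linear_combination θ₁ ^ 2 * cos_sq_add_sin_sq θ₃
  ext i j
  simp only [blochFisher, of_apply, dotProduct_blochVecQ_self, hrt, htt]
  fin_cases i <;> fin_cases j <;> simp [fisherQ] <;> field_simp <;> ring

theorem fisherQ_mul_eq_one {θ₁ θ₂ : ℝ} (h₁ : θ₁ ≠ 0) (h : θ₁ ^ 2 + θ₂ ^ 2 ≠ 1) :
    fisherQ θ₁ θ₂ * !![1 - θ₁ ^ 2, -(θ₁ * θ₂), 0; -(θ₁ * θ₂), 1 - θ₂ ^ 2, 0;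
      0, 0, 1 / θ₁ ^ 2] = 1 := by
  have hD : 1 - θ₁ ^ 2 - θ₂ ^ 2 ≠ 0 := by contrapose! h; linarith
  ext i j
  fin_cases i <;> fin_cases j <;>
    simp [fisherQ, mul_apply, Fin.sum_univ_three, one_apply] <;> field_simp <;> ring

end QubitModel

/-- For the qubit model with `θ₁ ≠ 0`, `θ₁² + θ₂² < 1`, if `L i`
are Hermitian SLD operators (`∂_i ρ = (ρ L_i + L_i ρ)/2`) and
`G i j = Re Tr(ρ L_i L_j)` is the SLD Fisher information matrix, then the inverse
of `G` is `diag((1−θ₁², −θ₁θ₂; −θ₁θ₂, 1−θ₂²), 1/θ₁²)`; in particular `(θ₁, θ₂)`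
are orthogonal to `θ₃`. -/
theorem stmt10 (θ₁ θ₂ θ₃ : ℝ) (h1 : θ₁ ≠ 0) (h : θ₁ ^ 2 + θ₂ ^ 2 < 1)
    (L : Fin 3 → Matrix (Fin 2) (Fin 2) ℂ) (hL : ∀ i, (L i).IsHermitian)
    (hSLD : ∀ i, drhoQ θ₁ θ₂ θ₃ i =
      ((1 : ℂ) / 2) • (rhoQ θ₁ θ₂ θ₃ * L i + L i * rhoQ θ₁ θ₂ θ₃))
    (G : Matrix (Fin 3) (Fin 3) ℝ)
    (hGdef : ∀ i j, G i j = ((rhoQ θ₁ θ₂ θ₃ * L i * L j).trace).re) :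
    G * !![1 - θ₁ ^ 2, -(θ₁ * θ₂), 0; -(θ₁ * θ₂), 1 - θ₂ ^ 2, 0;
           0, 0, 1 / θ₁ ^ 2] = 1 ∧
    (!![1 - θ₁ ^ 2, -(θ₁ * θ₂), 0; -(θ₁ * θ₂), 1 - θ₂ ^ 2, 0;
        0, 0, 1 / θ₁ ^ 2] : Matrix (Fin 3) (Fin 3) ℝ) * G = 1 ∧
    G 0 2 = 0 ∧ G 1 2 = 0 := by
  set r := blochVecQ θ₁ θ₂ θ₃
  set v := tangentQ θ₁ θ₃
  have hr : θ₁ ^ 2 + θ₂ ^ 2 ≠ 1 := h.ne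
  have hρ : (rhoQ θ₁ θ₂ θ₃).IsHermitian := rhoQ_eq_bloch θ₁ θ₂ θ₃ ▸ isHermitian_bloch _ _
  have hSLD' (i : Fin 3) : symmMul (rhoQ θ₁ θ₂ θ₃) (L i) = drhoQ θ₁ θ₂ θ₃ i := (hSLD i).symm
  have hℓ (i : Fin 3) : symmMul (rhoQ θ₁ θ₂ θ₃) (blochSLD r (v i)) = drhoQ θ₁ θ₂ θ₃ i := by
    rw [rhoQ_eq_bloch, symmMul_blochSLD (by rwa [dotProduct_blochVecQ_self]), drhoQ_eq_bloch]
  have hG : G = fisherQ θ₁ θ₂ := by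
    ext i j
    rw [hGdef, ← RCLike.re_eq_complex_re,
      re_trace_mul_mul_eq_of_symmMul_eq hρ (hL i) (hL j) ((hℓ i).trans (hSLD' i).symm),
      hSLD' j, drhoQ_eq_bloch, trace_blochSLD_mul, blochFisher_blochVecQ_tangentQ hr]
    exact Complex.ofReal_re _
  subst hG
  exact ⟨fisherQ_mul_eq_one h1 hr, mul_eq_one_comm.mp (fisherQ_mul_eq_one h1 hr),
    by simp [fisherQ], by simp [fisherQ]⟩
end

section
/- For the qubit model with two parameters (θ₁, θ₂) and known phase θ₃, the inverse RLD Fisher information matrix is (1 − s²)·I₂ where s² = θ₁² + θ₂², computed via g̃_{ij} = (⟨∂_i s, ∂_j s⟩ + i⟨∂_i s × ∂_j s, s⟩)/(1 − s²), and it satisfies the matrix inequality G⁻¹ ≥ G̃⁻¹, i.e. (1−θ₁², −θ₁θ₂; −θ₁θ₂, 1−θ₂²) − (1−s²)I₂ is positive semidefinite. -/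
open Matrix

/-- Tangent vectors `∂₁ s, ∂₂ s` of the Bloch vector. -/
noncomputable def blochD (θ₃ : ℝ) : Fin 2 → (Fin 3 → ℝ) :=
  ![![Real.cos θ₃, Real.sin θ₃, 0], ![0, 0, 1]]

/-- The Bloch vector `s_θ`. -/
noncomputable def blochS (θ₁ θ₂ θ₃ : ℝ) : Fin 3 → ℝ :=
  ![θ₁ * Real.cos θ₃, θ₁ * Real.sin θ₃, θ₂]

/-- The RLD Fisher information matrix
`g̃_{ij} = (⟨∂_i s, ∂_j s⟩ + i⟨∂_i s × ∂_j s, s⟩)/(1 − s²)`. -/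
noncomputable def rldG (θ₁ θ₂ θ₃ : ℝ) : Matrix (Fin 2) (Fin 2) ℂ :=
  Matrix.of fun i j =>
    (((blochD θ₃ i ⬝ᵥ blochD θ₃ j : ℝ) : ℂ) +
      Complex.I * ((crossProduct (blochD θ₃ i) (blochD θ₃ j) ⬝ᵥ blochS θ₁ θ₂ θ₃ : ℝ) : ℂ)) /
      ((1 - (θ₁ ^ 2 + θ₂ ^ 2) : ℝ) : ℂ)

/- The tangent vectors `∂₁ s, ∂₂ s` are orthonormal and `s = θ₁ ∂₁ s + θ₂ ∂₂ s` lies in their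
span, so the triple products `⟨∂_i s × ∂_j s, s⟩` vanish and `G̃ = (1 − s²)⁻¹ I₂`. For the
inverse SLD Fisher matrix `G⁻¹`, the difference `G⁻¹ − (1 − s²) I₂ = v vᵀ` with
`v = (θ₂, −θ₁)` is a rank-one Gram matrix. -/

theorem blochD_dotProduct_blochD (θ₃ : ℝ) (i j : Fin 2) :
    blochD θ₃ i ⬝ᵥ blochD θ₃ j = (1 : Matrix (Fin 2) (Fin 2) ℝ) i j := by
  fin_cases i <;> fin_cases j <;>
    simp [blochD, dotProduct, Fin.sum_univ_succ, ← sq]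

theorem blochS_eq_smul_add_smul (θ₁ θ₂ θ₃ : ℝ) :
    blochS θ₁ θ₂ θ₃ = θ₁ • blochD θ₃ 0 + θ₂ • blochD θ₃ 1 := by
  ext k
  fin_cases k <;> simp [blochS, blochD]

theorem cross_blochD_dotProduct_blochD (θ₃ : ℝ) (i j k : Fin 2) :
    blochD θ₃ i ⨯₃ blochD θ₃ j ⬝ᵥ blochD θ₃ k = 0 := by
  by_cases hij : i = j
  · rw [hij, cross_self, zero_dotProduct]
  · obtain rfl | rfl : k = i ∨ k = j := by omega
    · rw [dotProduct_comm, dot_self_cross]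
    · rw [dotProduct_comm, dot_cross_self]

theorem cross_blochD_dotProduct_blochS (θ₁ θ₂ θ₃ : ℝ) (i j : Fin 2) :
    blochD θ₃ i ⨯₃ blochD θ₃ j ⬝ᵥ blochS θ₁ θ₂ θ₃ = 0 := by
  simp only [blochS_eq_smul_add_smul, dotProduct_add, dotProduct_smul,
    cross_blochD_dotProduct_blochD, smul_zero, add_zero]

theorem rldG_eq_smul_one (θ₁ θ₂ θ₃ : ℝ) :
    rldG θ₁ θ₂ θ₃ = (((1 - (θ₁ ^ 2 + θ₂ ^ 2) : ℝ) : ℂ))⁻¹ • 1 := by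
  ext i j
  rw [rldG, of_apply, blochD_dotProduct_blochD, cross_blochD_dotProduct_blochS]
  rcases eq_or_ne i j with rfl | hij <;> simp [one_apply, *, div_eq_inv_mul]

theorem sld_inv_sub_smul_one_eq_vecMulVec (θ₁ θ₂ : ℝ) :
    (!![1 - θ₁ ^ 2, -(θ₁ * θ₂); -(θ₁ * θ₂), 1 - θ₂ ^ 2] : Matrix (Fin 2) (Fin 2) ℝ) -
      (1 - (θ₁ ^ 2 + θ₂ ^ 2)) • 1 = vecMulVec ![θ₂, -θ₁] ![θ₂, -θ₁] := by
  ext i j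
  fin_cases i <;> fin_cases j <;> simp [vecMulVec_apply] <;> ring

/-- For the two-parameter qubit model with known phase, the inverse
RLD Fisher information matrix is `(1 − s²)·I₂`, and `G⁻¹ ≥ G̃⁻¹`, i.e.
`(1−θ₁², −θ₁θ₂; −θ₁θ₂, 1−θ₂²) − (1−s²)I₂` is positive semidefinite. -/
theorem stmt12 (θ₁ θ₂ θ₃ : ℝ) (h : θ₁ ^ 2 + θ₂ ^ 2 < 1) :
    rldG θ₁ θ₂ θ₃ * (((1 - (θ₁ ^ 2 + θ₂ ^ 2) : ℝ) : ℂ) •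
      (1 : Matrix (Fin 2) (Fin 2) ℂ)) = 1 ∧
    ((!![1 - θ₁ ^ 2, -(θ₁ * θ₂); -(θ₁ * θ₂), 1 - θ₂ ^ 2] :
        Matrix (Fin 2) (Fin 2) ℝ) -
      (1 - (θ₁ ^ 2 + θ₂ ^ 2)) • (1 : Matrix (Fin 2) (Fin 2) ℝ)).PosSemidef := by
  have hs : ((1 - (θ₁ ^ 2 + θ₂ ^ 2) : ℝ) : ℂ) ≠ 0 := by
    exact_mod_cast (sub_pos.mpr h).ne'
  refine ⟨?_, ?_⟩
  · rw [rldG_eq_smul_one, smul_mul_smul_comm, inv_mul_cancel₀ hs, one_mul, one_smul]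
  · rw [sld_inv_sub_smul_one_eq_vecMulVec]
    simpa using posSemidef_vecMulVec_self_star ![θ₂, -θ₁]
end

section
/- For the Holevo bound with block weight, the region condition holds: for fixed 2×2 positive definite G⁻¹, positive semidefinite B = G⁻¹ − G̃⁻¹, and g³³, v₃₃ > 0 with v₃₃ > g³³ and γ = v₃₃/(v₃₃−g³³), a 2×2 symmetric matrix V₂ satisfies Tr(W V₂) + w₃ v₃₃ ≥ Tr(W G⁻¹) + w₃ g³³ + 2√(w₃ g³³ Tr(W B)) for all W > 0, w₃ > 0, if and only if V₂ ≥ γ G⁻¹ − (γ−1) G̃⁻¹ = G⁻¹ + (γ−1)B. -/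
/-!
Write `M = V₂ - G⁻¹ - (γ - 1) B`, `s = Tr(W M)`, `t = Tr(W B) ≥ 0` and `d = v₃₃ - g₃₃`, so that
`γ - 1 = g₃₃ / d`. The inequality becomes `2 √(w₃ g₃₃ t) ≤ s + (g₃₃ / d) t + w₃ d`; by AM-GM the
right-hand side minus `s` is at least the left-hand side, with equality at `w₃ = g₃₃ t / d²`, so the
inequality holds for all `w₃ > 0` exactly when `s ≥ 0`. Finally `Tr(W M) ≥ 0` for all `W > 0` is
equivalent to `M ≥ 0`, by testing against `W = x xᵀ + ε I` and letting `ε → 0`.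
-/

open Matrix Filter Topology

theorem two_mul_sqrt_mul_le_add {a b : ℝ} (ha : 0 ≤ a) (hb : 0 ≤ b) : 2 * √(a * b) ≤ a + b := by
  rw [Real.sqrt_mul ha]
  nlinarith [sq_nonneg (√a - √b), Real.sq_sqrt ha, Real.sq_sqrt hb]

theorem nonneg_of_forall_pos_add_mul_nonneg {a b : ℝ} (h : ∀ ε, 0 < ε → 0 ≤ a + ε * b) :
    0 ≤ a := by
  have hlim : Tendsto (fun ε : ℝ => a + ε * b) (𝓝[>] 0) (𝓝 a) := by
    simpa using ((by fun_prop : Continuous fun ε : ℝ => a + ε * b).tendsto 0).mono_left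
      nhdsWithin_le_nhds
  exact ge_of_tendsto hlim (eventually_nhdsWithin_of_forall h)

theorem forall_pos_two_mul_sqrt_le_iff {g d s t : ℝ} (hg : 0 ≤ g) (hd : 0 < d) (ht : 0 ≤ t) :
    (∀ w, 0 < w → 2 * √(w * g * t) ≤ s + g / d * t + w * d) ↔ 0 ≤ s := by
  constructor
  · intro h
    rcases (mul_nonneg hg ht).eq_or_lt with hgt | hgt
    · refine nonneg_of_forall_pos_add_mul_nonneg (b := d) fun w hw => ?_
      have hsqrt : √(w * g * t) = 0 := by rw [mul_assoc, ← hgt, mul_zero, Real.sqrt_zero]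
      have hct : g / d * t = 0 := by rw [div_mul_eq_mul_div, ← hgt, zero_div]
      linarith [h w hw]
    · have hopt := h (g * t / d ^ 2) (by positivity)
      have hsq : g * t / d ^ 2 * g * t = (g * t / d) ^ 2 := by field_simp
      rw [hsq, Real.sqrt_sq (by positivity)] at hopt
      have hw_opt : g * t / d ^ 2 * d = g / d * t := by field_simp
      have hgt_div : g * t / d = g / d * t := by ring
      linarith
  · intro hs w hw
    have hprod : w * g * t = g / d * t * (w * d) := by field_simp
    rw [hprod]
    linarith [two_mul_sqrt_mul_le_add (by positivity : 0 ≤ g / d * t) (by positivity : 0 ≤ w * d)]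

namespace Matrix

variable {n : Type*} [Fintype n]

theorem PosSemidef.trace_mul_nonneg [DecidableEq n] {A B : Matrix n n ℝ} (hA : A.PosSemidef)
    (hB : B.PosSemidef) : 0 ≤ (A * B).trace := by
  obtain ⟨C, rfl⟩ : ∃ C : Matrix n n ℝ, B = Cᴴ * C := by
    open scoped MatrixOrder in exact CStarAlgebra.nonneg_iff_eq_star_mul_self.mp hB.nonneg
  rw [trace_mul_comm, Matrix.mul_assoc, trace_mul_comm]
  exact (hA.mul_mul_conjTranspose_same C).trace_nonneg

theorem trace_vecMulVec_self_mul (x : n → ℝ) (M : Matrix n n ℝ) :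
    (vecMulVec x x * M).trace = x ⬝ᵥ (M *ᵥ x) := by
  rw [vecMulVec_mul, trace_vecMulVec, dotProduct_mulVec]
  exact dotProduct_comm _ _

theorem IsHermitian.posSemidef_iff_forall_posDef_trace_mul_nonneg [DecidableEq n]
    {M : Matrix n n ℝ} (hM : M.IsHermitian) :
    M.PosSemidef ↔ ∀ W : Matrix n n ℝ, W.PosDef → 0 ≤ (W * M).trace := by
  refine ⟨fun hMpsd W hW => hW.posSemidef.trace_mul_nonneg hMpsd, fun h => ?_⟩
  refine posSemidef_iff_dotProduct_mulVec.mpr ⟨hM, fun x => ?_⟩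
  refine nonneg_of_forall_pos_add_mul_nonneg (b := M.trace) fun ε hε => ?_
  have hW : (vecMulVec x x + ε • (1 : Matrix n n ℝ)).PosDef :=
    PosDef.posSemidef_add (by simpa using posSemidef_vecMulVec_self_star x) (PosDef.one.smul hε)
  simpa [Matrix.add_mul, trace_vecMulVec_self_mul] using h _ hW

end Matrix

/-- For `G⁻¹` positive definite, `B = G⁻¹ − G̃⁻¹` positive
semidefinite, `v₃₃ > g³³ > 0` and `γ = v₃₃/(v₃₃−g³³)`, a symmetric `V₂` satisfies
`Tr(W V₂) + w₃ v₃₃ ≥ Tr(W G⁻¹) + w₃ g³³ + 2√(w₃ g³³ Tr(W B))` for all `W > 0`,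
`w₃ > 0`, iff `V₂ ≥ G⁻¹ + (γ−1)B`. -/
theorem stmt17 (Ginv B : Matrix (Fin 2) (Fin 2) ℝ)
    (hG : Ginv.PosDef) (hB : B.PosSemidef)
    (g₃₃ v₃₃ : ℝ) (hg : 0 < g₃₃) (hvg : g₃₃ < v₃₃)
    (V₂ : Matrix (Fin 2) (Fin 2) ℝ) (hV₂ : V₂.IsHermitian) :
    (∀ W : Matrix (Fin 2) (Fin 2) ℝ, W.PosDef → ∀ w₃ : ℝ, 0 < w₃ →
      (W * Ginv).trace + w₃ * g₃₃ + 2 * Real.sqrt (w₃ * g₃₃ * (W * B).trace) ≤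
        (W * V₂).trace + w₃ * v₃₃) ↔
    (V₂ - (Ginv + (v₃₃ / (v₃₃ - g₃₃) - 1) • B)).PosSemidef := by
  have hd : 0 < v₃₃ - g₃₃ := sub_pos.mpr hvg
  have hγ : v₃₃ / (v₃₃ - g₃₃) - 1 = g₃₃ / (v₃₃ - g₃₃) := by field_simp; ring
  rw [hγ]
  set M := V₂ - (Ginv + (g₃₃ / (v₃₃ - g₃₃)) • B)
  have hM : M.IsHermitian := hV₂.sub (hG.isHermitian.add (hB.isHermitian.smul rfl))
  rw [hM.posSemidef_iff_forall_posDef_trace_mul_nonneg]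
  refine forall₂_congr fun W hW => ?_
  rw [← forall_pos_two_mul_sqrt_le_iff hg.le hd (hW.posSemidef.trace_mul_nonneg hB)]
  have hsplit : (W * V₂).trace =
      (W * M).trace + (W * Ginv).trace + g₃₃ / (v₃₃ - g₃₃) * (W * B).trace := by
    simp only [M, Matrix.mul_sub, Matrix.mul_add, Matrix.mul_smul, trace_sub, trace_add,
      trace_smul, smul_eq_mul]
    ring
  refine forall₂_congr fun w₃ _ => ?_
  rw [hsplit]
  constructor <;> intro h <;> linarith
end
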